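/- For every integer k ≥ 2, the coloring ψ is a proper 3-coloring of the graph F_k. -/

import Mathlib

/-- Vertices of the gadget graph `F_k`: `u`, `v`, `x`, `y`, the vertices
`z_1, …, z_5` (`z j` models `z_{j+1}`), their primed copies `z'_1, …, z'_5`
(`z' j`), the vertices `y_1, …, y_k` (`Y i` models `y_{i+1}`), and the vertices
`x_{1,i}` (`p i`) and `x_{2,i}` (`q i`) for `1 ≤ i ≤ k−1`. -/
inductive FVert (k : ℕ) : Type
  | u : FVert k
  | v : FVert k
  | x : FVert k
  | y : FVert k
  | z : Fin 5 → FVert k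
  | z' : Fin 5 → FVert k
  | Y : Fin k → FVert k
  | p : Fin (k - 1) → FVert k
  | q : Fin (k - 1) → FVert k

/-- The edges of `F_k`: `z₁x`, `z'₁y`, `z₁v`, `z'₁v`, `uz₃`, `uz'₃`, `uz₅`, `uz'₅`;
the triangles `{z₁,z₂,z₃}`, `{z'₁,z'₂,z'₃}`, `{z₄,z₂,z₃}`, `{z'₄,z'₂,z'₃}`,
`{z₅,z₄,y}`, `{z'₅,z'₄,x}`; for each `1 ≤ i ≤ k−1` the triangles
`{yᵢ, x_{1,i}, x_{2,i}}` and `{y_{i+1}, x_{1,i}, x_{2,i}}` together with the edge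
`u x_{1,i}`; and the edges `x y_k`, `y y_k`, `v y_k`. -/
def FRel (k : ℕ) : FVert k → FVert k → Prop
  | .z j, .x => (j : ℕ) = 0
  | .z' j, .x => (j : ℕ) = 3 ∨ (j : ℕ) = 4
  | .z' j, .y => (j : ℕ) = 0
  | .z j, .y => (j : ℕ) = 3 ∨ (j : ℕ) = 4
  | .z j, .v => (j : ℕ) = 0
  | .z' j, .v => (j : ℕ) = 0
  | .u, .z j => (j : ℕ) = 2 ∨ (j : ℕ) = 4
  | .u, .z' j => (j : ℕ) = 2 ∨ (j : ℕ) = 4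
  | .z i, .z j =>
      ((i : ℕ) = 0 ∧ (j : ℕ) = 1) ∨ ((i : ℕ) = 0 ∧ (j : ℕ) = 2) ∨
      ((i : ℕ) = 1 ∧ (j : ℕ) = 2) ∨ ((i : ℕ) = 3 ∧ (j : ℕ) = 1) ∨
      ((i : ℕ) = 3 ∧ (j : ℕ) = 2) ∨ ((i : ℕ) = 4 ∧ (j : ℕ) = 3)
  | .z' i, .z' j =>
      ((i : ℕ) = 0 ∧ (j : ℕ) = 1) ∨ ((i : ℕ) = 0 ∧ (j : ℕ) = 2) ∨
      ((i : ℕ) = 1 ∧ (j : ℕ) = 2) ∨ ((i : ℕ) = 3 ∧ (j : ℕ) = 1) ∨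
      ((i : ℕ) = 3 ∧ (j : ℕ) = 2) ∨ ((i : ℕ) = 4 ∧ (j : ℕ) = 3)
  | .Y i, .p j => (i : ℕ) = (j : ℕ) ∨ (i : ℕ) = (j : ℕ) + 1
  | .Y i, .q j => (i : ℕ) = (j : ℕ) ∨ (i : ℕ) = (j : ℕ) + 1
  | .p i, .q j => (i : ℕ) = (j : ℕ)
  | .u, .p _ => True
  | .x, .Y i => (i : ℕ) = k - 1
  | .y, .Y i => (i : ℕ) = k - 1
  | .v, .Y i => (i : ℕ) = k - 1
  | _, _ => False

/-- The gadget graph `F_k`. -/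
def Fgraph (k : ℕ) : SimpleGraph (FVert k) := SimpleGraph.fromRel (FRel k)

/-- The coloring `ψ` of `F_k`; colors `1, 2, 3` are modelled as `0, 1, 2 : Fin 3`:
`ψ(u) = 1`, `ψ(v) = 2`, `ψ(x) = ψ(y) = 1`, `ψ(z₁) = ψ(z'₁) = ψ(z₄) = ψ(z'₄) = 3`,
`ψ(z₅) = ψ(z'₅) = ψ(z₃) = ψ(z'₃) = 2`, `ψ(z₂) = ψ(z'₂) = 1`, and `ψ(yᵢ) = 3`,
`ψ(x_{1,i}) = 2`, `ψ(x_{2,i}) = 1` for all `i`. -/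
def ψF (k : ℕ) : FVert k → Fin 3
  | .u => 0
  | .v => 1
  | .x => 0
  | .y => 0
  | .z j => ![2, 0, 1, 2, 1] j
  | .z' j => ![2, 0, 1, 2, 1] j
  | .Y _ => 2
  | .p _ => 1
  | .q _ => 0

theorem SimpleGraph.fromRel_adj_ne_of_rel {V α : Type*} {r : V → V → Prop} {f : V → α}
    (h : ∀ a b, r a b → f a ≠ f b) {a b : V} (hab : (SimpleGraph.fromRel r).Adj a b) :
    f a ≠ f b := by
  obtain ⟨-, hr | hr⟩ := hab
  · exact h a b hr
  · exact (h b a hr).symm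

/- `ψF` is constant on the `k`-indexed families `Y`, `p`, `q`, so each case reduces to a finite
check over at most two indices in `Fin 5`. -/
theorem ψF_ne_of_FRel {k : ℕ} : ∀ p q : FVert k, FRel k p q → ψF k p ≠ ψF k q := by
  rintro (_ | _ | _ | _ | i | i | i | i | i) (_ | _ | _ | _ | j | j | j | j | j) h <;>
    simp only [FRel, ψF] at h ⊢ <;>
    first | decide | (revert i j; decide) | (revert i; decide) | (revert j; decide)

theorem stmt12_general (k : ℕ) :
    ∀ p q, (Fgraph k).Adj p q → ψF k p ≠ ψF k q :=
  fun _ _ => SimpleGraph.fromRel_adj_ne_of_rel ψF_ne_of_FRel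

/-- For every `k ≥ 2`, `ψ` is a proper 3-coloring of `F_k`. -/
theorem stmt12 (k : ℕ) (hk : 2 ≤ k) :
    ∀ p q, (Fgraph k).Adj p q → ψF k p ≠ ψF k q :=
  stmt12_general k
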